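/- arXiv:2407.08573 — 4 statements merged into one kernel-verified Lean document; each statement's English description precedes it below -/
import Mathlib

section
/- A morphism f : A → B in Ord is a descent morphism, or equivalently a pullback-stable regular epimorphism, if and only if for all b₀ ≤ b₁ in B there exist a₀ ≤ a₁ in A with f(a₀) = b₀ and f(a₁) = b₁. -/
open CategoryTheory Limits

universe u
universe u₁ v₁ u₂ v₂

attribute [local instance] CategoryTheory.ConcreteCategory.instFunLike

namespace Desc

/-! ### Order-theoretic notions for preorders ("ordered sets") -/

/-- `x ≅ y`: equivalence in a preorder. -/
def EquivLE {X : Type u} [Preorder X] (x y : X) : Prop := x ≤ y ∧ y ≤ x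

/-- `m` is a binary meet (greatest lower bound) of `y` and `z`. -/
def IsMeet {X : Type u} [Preorder X] (y z m : X) : Prop :=
  m ≤ y ∧ m ≤ z ∧ ∀ u, u ≤ y → u ≤ z → u ≤ m

/-- `j` is a join (least upper bound) of the subset `S` computed in the down-set `↓x`. -/
def IsLocalJoin {X : Type u} [Preorder X] (x : X) (S : Set X) (j : X) : Prop :=
  j ≤ x ∧ (∀ s ∈ S, s ≤ j) ∧ ∀ u, u ≤ x → (∀ s ∈ S, s ≤ u) → j ≤ u

/-- `X` is locally complete: every subset of a down-set `↓x` has a join in `↓x`. -/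
def LocallyComplete (X : Type u) [Preorder X] : Prop :=
  ∀ x : X, ∀ S : Set X, (∀ s ∈ S, s ≤ x) → ∃ j, IsLocalJoin x S j

/-- `X` is complete: every subset has a join (least upper bound). -/
def CompleteOrd (X : Type u) [Preorder X] : Prop :=
  ∀ S : Set X, ∃ j, IsLUB S j

/-- `X` locally has binary meets: each down-set `↓x` has binary meets
(these are automatically meets in `X` of the pair). -/
def LocallyBinaryMeets (X : Type u) [Preorder X] : Prop :=
  ∀ x y z : X, y ≤ x → z ≤ x → ∃ m, IsMeet y z m

/-- `X` is locally cartesian closed: each down-set `↓x` has binary meets and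
exponentials `z^y` satisfying `w ∧ y ≤ z ↔ w ≤ z^y`. -/
def LocallyCartesianClosed (X : Type u) [Preorder X] : Prop :=
  LocallyBinaryMeets X ∧
    ∀ x y z : X, y ≤ x → z ≤ x →
      ∃ e, e ≤ x ∧ ∀ w, w ≤ x → ((∃ m, IsMeet w y m ∧ m ≤ z) ↔ w ≤ e)

theorem LocallyComplete.meets {X : Type u} [Preorder X] (h : LocallyComplete X) :
    LocallyBinaryMeets X := by
  intro x y z hy hz
  obtain ⟨j, hj⟩ := h x {u | u ≤ y ∧ u ≤ z} (fun s hs => hs.1.trans hy)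
  exact ⟨j, hj.2.2 y hy (fun s hs => hs.1), hj.2.2 z hz (fun s hs => hs.2),
    fun u h1 h2 => hj.2.1 u ⟨h1, h2⟩⟩

theorem CompleteOrd.meets {X : Type u} [Preorder X] (h : CompleteOrd X) :
    LocallyBinaryMeets X := by
  intro _ y z _ _
  obtain ⟨j, hj⟩ := h {u | u ≤ y ∧ u ≤ z}
  exact ⟨j, hj.2 (fun u hu => hu.1), hj.2 (fun u hu => hu.2),
    fun u h1 h2 => hj.1 ⟨h1, h2⟩⟩

/-! ### Descent-theoretic notions -/

/-- A morphism `f : A ⟶ B` in a category with pullbacks is an *effective descent morphism*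
if the comparison functor from `𝒜/B` to the Eilenberg–Moore category of the monad induced on
`𝒜/A` by the adjunction `f_! ⊣ f*` is an equivalence, i.e. `f*` is monadic. -/
def IsEffectiveDescentMorphism {C : Type*} [Category C] [HasPullbacks C]
    {A B : C} (f : A ⟶ B) : Prop :=
  (Monad.comparison (Over.mapPullbackAdj f)).IsEquivalence

/-- A morphism `f : A ⟶ B` in a category with pullbacks is a *descent morphism*
if the comparison functor from `𝒜/B` to the Eilenberg–Moore category of the monad induced on
`𝒜/A` by the adjunction `f_! ⊣ f*` is fully faithful. -/
def IsDescentMorphism {C : Type*} [Category C] [HasPullbacks C]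
    {A B : C} (f : A ⟶ B) : Prop :=
  (Monad.comparison (Over.mapPullbackAdj f)).Full ∧
    (Monad.comparison (Over.mapPullbackAdj f)).Faithful

/-- A morphism `f : A ⟶ B` is a (pullback-)stable regular epimorphism if every pullback of it
(along any `g : Z ⟶ B`) is a regular epimorphism. -/
def IsStableRegularEpi {C : Type*} [Category C] [HasPullbacks C]
    {A B : C} (f : A ⟶ B) : Prop :=
  ∀ ⦃Z : C⦄ (g : Z ⟶ B), Nonempty (RegularEpi (pullback.snd f g))



section PreordPullbacks

instance : HasPullbacks Preord.{u} := by
  have key : ∀ {A B C : Preord.{u}} (f : A ⟶ C) (g : B ⟶ C), HasLimit (cospan f g) := by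
    intro A B C f g
    let P : Preord.{u} := Preord.of {p : A × B // f p.1 = g p.2}
    let fst : P ⟶ A := Preord.ofHom ⟨fun p => p.1.1, fun _ _ h => h.1⟩
    let snd : P ⟶ B := Preord.ofHom ⟨fun p => p.1.2, fun _ _ h => h.2⟩
    have eq : fst ≫ f = snd ≫ g := Preord.ext (fun p => p.2)
    refine HasLimit.mk ⟨_, PullbackCone.IsLimit.mk eq
      (fun s => Preord.ofHom ⟨fun d => ⟨(s.fst d, s.snd d),
        congrFun (congrArg (fun (h : s.pt ⟶ C) => (h : s.pt → C)) s.condition) d⟩,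
        fun _ _ h => ⟨s.fst.hom.monotone h, s.snd.hom.monotone h⟩⟩)
      (fun s => rfl) (fun s => rfl) (fun s m h1 h2 => ?_)⟩
    apply Preord.ext
    intro d
    apply Subtype.ext
    exact Prod.ext (congrFun (congrArg (fun (h : s.pt ⟶ A) => (h : s.pt → A)) h1) d)
      (congrFun (congrArg (fun (h : s.pt ⟶ B) => (h : s.pt → B)) h2) d)
  exact @hasPullbacks_of_hasLimit_cospan _ _ (fun {A B C f g} => key f g)

instance : HasPullbacks PartOrd.{u} := by
  have key : ∀ {A B C : PartOrd.{u}} (f : A ⟶ C) (g : B ⟶ C), HasLimit (cospan f g) := by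
    intro A B C f g
    let P : PartOrd.{u} := PartOrd.of {p : A × B // f p.1 = g p.2}
    let fst : P ⟶ A := PartOrd.ofHom ⟨fun p => p.1.1, fun _ _ h => h.1⟩
    let snd : P ⟶ B := PartOrd.ofHom ⟨fun p => p.1.2, fun _ _ h => h.2⟩
    have eq : fst ≫ f = snd ≫ g := PartOrd.ext (fun p => p.2)
    refine HasLimit.mk ⟨_, PullbackCone.IsLimit.mk eq
      (fun s => PartOrd.ofHom ⟨fun d => ⟨(s.fst d, s.snd d),
        congrFun (congrArg (fun (h : s.pt ⟶ C) => (h : s.pt → C)) s.condition) d⟩,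
        fun _ _ h => ⟨s.fst.hom.monotone h, s.snd.hom.monotone h⟩⟩)
      (fun s => rfl) (fun s => rfl) (fun s m h1 h2 => ?_)⟩
    apply PartOrd.ext
    intro d
    apply Subtype.ext
    exact Prod.ext (congrFun (congrArg (fun (h : s.pt ⟶ A) => (h : s.pt → A)) h1) d)
      (congrFun (congrArg (fun (h : s.pt ⟶ B) => (h : s.pt → B)) h2) d)
  exact @hasPullbacks_of_hasLimit_cospan _ _ (fun {A B C f g} => key f g)

end PreordPullbacks



variable (X : Type u) [Preorder X]

/-! ### The lax comma category `Ord // X` -/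

/-- Objects of the lax comma category `Ord // X`: an ordered set `A` together with a
monotone map `α : A → X`. -/
structure OrdComma : Type (u + 1) where
  carrier : Type u
  [str : Preorder carrier]
  map : carrier → X
  mono : Monotone map

attribute [instance] OrdComma.str

variable {X}

/-- Morphisms in `Ord // X`: monotone maps `f` with `α(a) ≤ β(f(a))`. -/
@[ext]
structure OrdCommaHom (A B : OrdComma X) : Type u where
  toFun : A.carrier → B.carrier
  mono : Monotone toFun
  le : ∀ a, A.map a ≤ B.map (toFun a)

instance : Category (OrdComma X) where
  Hom := OrdCommaHom
  id A := ⟨id, monotone_id, fun _ => le_refl _⟩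
  comp f g := ⟨OrdCommaHom.toFun g ∘ OrdCommaHom.toFun f,
    (OrdCommaHom.mono g).comp (OrdCommaHom.mono f),
    fun a => (OrdCommaHom.le f a).trans (OrdCommaHom.le g _)⟩
  id_comp _ := rfl
  comp_id _ := rfl
  assoc _ _ _ := rfl

/-- The underlying function of a morphism in `Ord // X`. -/
def OrdComma.app {A B : OrdComma X} (f : A ⟶ B) : A.carrier → B.carrier :=
  OrdCommaHom.toFun f

/-! ### The category `Fam(X)` of set-indexed families of elements of `X` -/

variable (X) in
/-- Objects of `Fam(X)`: families `(α_j)_{j ∈ J}` of elements of `X`. -/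
structure FamCat : Type (u + 1) where
  idx : Type u
  val : idx → X

/-- Morphisms in `Fam(X)`: functions `f : J → K` with `α_j ≤ β_{f(j)}`. -/
@[ext]
structure FamHom (A B : FamCat X) : Type u where
  toFun : A.idx → B.idx
  le : ∀ j, A.val j ≤ B.val (toFun j)

instance : Category (FamCat X) where
  Hom := FamHom
  id A := ⟨id, fun _ => le_refl _⟩
  comp f g := ⟨FamHom.toFun g ∘ FamHom.toFun f,
    fun a => (FamHom.le f a).trans (FamHom.le g _)⟩
  id_comp _ := rfl
  comp_id _ := rfl
  assoc _ _ _ := rfl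

/-- The underlying function of a morphism in `Fam(X)`. -/
def FamCat.app {A B : FamCat X} (f : A ⟶ B) : A.idx → B.idx :=
  FamHom.toFun f

/-! ### The category `Ord ×_Set Fam(X)` -/

variable (X) in
/-- Objects of `Ord ×_Set Fam(X)`: an ordered set `C` with an arbitrary function
`χ : C → X`. -/
structure OrdFam : Type (u + 1) where
  carrier : Type u
  [str : Preorder carrier]
  map : carrier → X

attribute [instance] OrdFam.str

/-- Morphisms in `Ord ×_Set Fam(X)`: monotone maps `f` with `χ(c) ≤ ψ(f(c))`. -/
@[ext]
structure OrdFamHom (A B : OrdFam X) : Type u where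
  toFun : A.carrier → B.carrier
  mono : Monotone toFun
  le : ∀ a, A.map a ≤ B.map (toFun a)

instance : Category (OrdFam X) where
  Hom := OrdFamHom
  id A := ⟨id, monotone_id, fun _ => le_refl _⟩
  comp f g := ⟨OrdFamHom.toFun g ∘ OrdFamHom.toFun f,
    (OrdFamHom.mono g).comp (OrdFamHom.mono f),
    fun a => (OrdFamHom.le f a).trans (OrdFamHom.le g _)⟩
  id_comp _ := rfl
  comp_id _ := rfl
  assoc _ _ _ := rfl

/-! ### Functors between these categories -/

variable (X) in
/-- The forgetful functor `Ord // X ⥤ Ord`. -/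
def ordCommaForget : OrdComma X ⥤ Preord.{u} where
  obj A := Preord.of A.carrier
  map f := Preord.ofHom ⟨OrdCommaHom.toFun f, OrdCommaHom.mono f⟩
  map_id _ := rfl
  map_comp _ _ := rfl

variable (X) in
/-- The forgetful functor `Ord // X ⥤ Fam(X)`, `(A, α) ↦ (α(a))_{a ∈ A}`. -/
def ordCommaToFam : OrdComma X ⥤ FamCat X where
  obj A := ⟨A.carrier, A.map⟩
  map f := ⟨OrdCommaHom.toFun f, OrdCommaHom.le f⟩
  map_id _ := rfl
  map_comp _ _ := rfl

variable (X) in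
/-- The projection `ρ₁ : Ord ×_Set Fam(X) ⥤ Ord`. -/
def rho₁ : OrdFam X ⥤ Preord.{u} where
  obj A := Preord.of A.carrier
  map f := Preord.ofHom ⟨OrdFamHom.toFun f, OrdFamHom.mono f⟩
  map_id _ := rfl
  map_comp _ _ := rfl

variable (X) in
/-- The projection `ρ₂ : Ord ×_Set Fam(X) ⥤ Fam(X)`. -/
def rho₂ : OrdFam X ⥤ FamCat X where
  obj A := ⟨A.carrier, A.map⟩
  map f := ⟨OrdFamHom.toFun f, OrdFamHom.le f⟩
  map_id _ := rfl
  map_comp _ _ := rfl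

/-! ### Restrictions `f_x : A_x → B_x` -/

/-- For `(A, α)` in `Ord // X` and `x ∈ X`, the ordered set `A_x = {a ∈ A : x ≤ α(a)}`. -/
def OrdComma.fiber (A : OrdComma X) (x : X) : Preord.{u} :=
  Preord.of {a : A.carrier // x ≤ A.map a}

/-- The restriction `f_x : A_x → B_x` of a morphism `f : (A, α) ⟶ (B, β)` of `Ord // X`. -/
def OrdComma.fiberMap {A B : OrdComma X} (f : A ⟶ B) (x : X) :
    A.fiber x ⟶ B.fiber x :=
  Preord.ofHom ⟨fun a => ⟨OrdCommaHom.toFun f a.1, a.2.trans (OrdCommaHom.le f a.1)⟩,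
    fun _ _ h => OrdCommaHom.mono f h⟩



variable {X : Type u} [Preorder X]

theorem OrdComma.hasPullbacks (hm : LocallyBinaryMeets X) :
    HasPullbacks (OrdComma X) := by
  have key : ∀ {A B C : OrdComma X} (f : A ⟶ C) (g : B ⟶ C), HasLimit (cospan f g) := by
    intro A B C f g
    have hmeet : ∀ p : {p : A.carrier × B.carrier //
        OrdCommaHom.toFun f p.1 = OrdCommaHom.toFun g p.2},
        ∃ m, IsMeet (A.map p.1.1) (B.map p.1.2) m := fun p =>
      hm (C.map (OrdCommaHom.toFun f p.1.1)) _ _ (OrdCommaHom.le f p.1.1)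
        (by rw [p.2]; exact OrdCommaHom.le g p.1.2)
    choose μ hμ using hmeet
    let P : OrdComma X :=
      { carrier := {p : A.carrier × B.carrier //
          OrdCommaHom.toFun f p.1 = OrdCommaHom.toFun g p.2}
        map := μ
        mono := fun p q h => by
          have hpq : p.1 ≤ q.1 := h
          exact (hμ q).2.2 _ ((hμ p).1.trans (A.mono (Prod.le_def.mp hpq).1))
            ((hμ p).2.1.trans (B.mono (Prod.le_def.mp hpq).2)) }
    let pfst : P ⟶ A := ⟨fun p => p.1.1, fun _ _ h => h.1, fun p => (hμ p).1⟩
    let psnd : P ⟶ B := ⟨fun p => p.1.2, fun _ _ h => h.2, fun p => (hμ p).2.1⟩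
    have eq : pfst ≫ f = psnd ≫ g := OrdCommaHom.ext (funext fun p => p.2)
    refine HasLimit.mk ⟨_, PullbackCone.IsLimit.mk eq
      (fun s => ⟨fun d => ⟨(OrdCommaHom.toFun s.fst d, OrdCommaHom.toFun s.snd d),
          congrFun (congrArg OrdCommaHom.toFun s.condition) d⟩,
        fun _ _ h => ⟨OrdCommaHom.mono s.fst h, OrdCommaHom.mono s.snd h⟩,
        fun d => (hμ _).2.2 _ (OrdCommaHom.le s.fst d) (OrdCommaHom.le s.snd d)⟩)
      (fun s => rfl) (fun s => rfl) (fun s m h1 h2 => ?_)⟩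
    apply OrdCommaHom.ext
    funext d
    exact Subtype.ext (Prod.ext (congrFun (congrArg OrdCommaHom.toFun h1) d)
      (congrFun (congrArg OrdCommaHom.toFun h2) d))
  exact @hasPullbacks_of_hasLimit_cospan _ _ (fun {A B C f g} => key f g)

theorem FamCat.hasPullbacks (hm : LocallyBinaryMeets X) :
    HasPullbacks (FamCat X) := by
  have key : ∀ {A B C : FamCat X} (f : A ⟶ C) (g : B ⟶ C), HasLimit (cospan f g) := by
    intro A B C f g
    have hmeet : ∀ p : {p : A.idx × B.idx // FamHom.toFun f p.1 = FamHom.toFun g p.2},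
        ∃ m, IsMeet (A.val p.1.1) (B.val p.1.2) m := fun p =>
      hm (C.val (FamHom.toFun f p.1.1)) _ _ (FamHom.le f p.1.1)
        (by rw [p.2]; exact FamHom.le g p.1.2)
    choose μ hμ using hmeet
    let P : FamCat X :=
      { idx := {p : A.idx × B.idx // FamHom.toFun f p.1 = FamHom.toFun g p.2}
        val := μ }
    let pfst : P ⟶ A := ⟨fun p => p.1.1, fun p => (hμ p).1⟩
    let psnd : P ⟶ B := ⟨fun p => p.1.2, fun p => (hμ p).2.1⟩
    have eq : pfst ≫ f = psnd ≫ g := FamHom.ext (funext fun p => p.2)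
    refine HasLimit.mk ⟨_, PullbackCone.IsLimit.mk eq
      (fun s => ⟨fun d => ⟨(FamHom.toFun s.fst d, FamHom.toFun s.snd d),
          congrFun (congrArg FamHom.toFun s.condition) d⟩,
        fun d => (hμ _).2.2 _ (FamHom.le s.fst d) (FamHom.le s.snd d)⟩)
      (fun s => rfl) (fun s => rfl) (fun s m h1 h2 => ?_)⟩
    apply FamHom.ext
    funext d
    exact Subtype.ext (Prod.ext (congrFun (congrArg FamHom.toFun h1) d)
      (congrFun (congrArg FamHom.toFun h2) d))
  exact @hasPullbacks_of_hasLimit_cospan _ _ (fun {A B C f g} => key f g)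

theorem OrdFam.hasPullbacks (hm : LocallyBinaryMeets X) :
    HasPullbacks (OrdFam X) := by
  have key : ∀ {A B C : OrdFam X} (f : A ⟶ C) (g : B ⟶ C), HasLimit (cospan f g) := by
    intro A B C f g
    have hmeet : ∀ p : {p : A.carrier × B.carrier //
        OrdFamHom.toFun f p.1 = OrdFamHom.toFun g p.2},
        ∃ m, IsMeet (A.map p.1.1) (B.map p.1.2) m := fun p =>
      hm (C.map (OrdFamHom.toFun f p.1.1)) _ _ (OrdFamHom.le f p.1.1)
        (by rw [p.2]; exact OrdFamHom.le g p.1.2)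
    choose μ hμ using hmeet
    let P : OrdFam X :=
      { carrier := {p : A.carrier × B.carrier //
          OrdFamHom.toFun f p.1 = OrdFamHom.toFun g p.2}
        map := μ }
    let pfst : P ⟶ A := ⟨fun p => p.1.1, fun _ _ h => h.1, fun p => (hμ p).1⟩
    let psnd : P ⟶ B := ⟨fun p => p.1.2, fun _ _ h => h.2, fun p => (hμ p).2.1⟩
    have eq : pfst ≫ f = psnd ≫ g := OrdFamHom.ext (funext fun p => p.2)
    refine HasLimit.mk ⟨_, PullbackCone.IsLimit.mk eq
      (fun s => ⟨fun d => ⟨(OrdFamHom.toFun s.fst d, OrdFamHom.toFun s.snd d),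
          congrFun (congrArg OrdFamHom.toFun s.condition) d⟩,
        fun _ _ h => ⟨OrdFamHom.mono s.fst h, OrdFamHom.mono s.snd h⟩,
        fun d => (hμ _).2.2 _ (OrdFamHom.le s.fst d) (OrdFamHom.le s.snd d)⟩)
      (fun s => rfl) (fun s => rfl) (fun s m h1 h2 => ?_)⟩
    apply OrdFamHom.ext
    funext d
    exact Subtype.ext (Prod.ext (congrFun (congrArg OrdFamHom.toFun h1) d)
      (congrFun (congrArg OrdFamHom.toFun h2) d))
  exact @hasPullbacks_of_hasLimit_cospan _ _ (fun {A B C f g} => key f g)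



variable (X : Type u) [Preorder X]

/-- The set of connected components of an ordered set `X`: the quotient of `X` by the
equivalence relation generated by `≤` (zigzags). -/
def ConnComp : Type u := Quot (fun a b : X => a ≤ b)

/-- The connected component of `X` corresponding to `i`, as an ordered set. -/
def Component (i : ConnComp X) : Type u :=
  {x : X // Quot.mk (fun a b : X => a ≤ b) x = i}

instance (i : ConnComp X) : Preorder (Component X i) :=
  Subtype.preorder _

/-- The comparison functor `Ord // X ⥤ ∏_{i ∈ I} Ord // X_i`, where `(X_i)_{i ∈ I}` are the
connected components of `X`: it sends `(A, α)` to the family of (co)restrictions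
`(A_i, α_i : A_i → X_i)` with `A_i = α⁻¹(X_i)`. -/
def componentFunctor : OrdComma X ⥤ (∀ i : ConnComp X, OrdComma (Component X i)) where
  obj A := fun i =>
    { carrier := {a : A.carrier // Quot.mk (fun a b : X => a ≤ b) (A.map a) = i}
      map := fun a => ⟨A.map a.1, a.2⟩
      mono := fun _ _ h => A.mono h }
  map {A B} f := fun i =>
    { toFun := fun a => ⟨OrdCommaHom.toFun f a.1,
        (Quot.sound (OrdCommaHom.le f a.1)).symm.trans a.2⟩
      mono := fun _ _ h => OrdCommaHom.mono f h
      le := fun a => OrdCommaHom.le f a.1 }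
  map_id A := by
    funext i
    apply OrdCommaHom.ext
    funext a
    rfl
  map_comp f g := by
    funext i
    apply OrdCommaHom.ext
    funext a
    rfl

/-!
Write `2` for the chain `0 ≤ 1`. Given `b₀ ≤ b₁` in `B`, let `χ = liftTest f b₀ b₁ : 2 → Prop`,
with `Prop` ordered by implication, send `i` to "`i = 1` implies that `b₀ ≤ b₁` lifts along `f`".
Then `b₀ ≤ b₁` lifts iff `χ` is monotone, and `χ` is always monotone after composition with the
projection `P → 2` of the pullback `P` of `f` along `b₀ ≤ b₁ : 2 → B`.

If `P → 2` is a regular, hence strong, epimorphism, it lifts against the injective projection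
of the graph of `χ` onto `2`, and `χ` is monotone. If `f` is a descent morphism, `f*` reflects
isomorphisms; it sends the graph projection, seen over `B`, to a bijective order-reflecting map,
so the graph projection is an isomorphism and again `χ` is monotone.

Conversely, if inequalities lift along `f` they lift along every pullback of `f`, and a
surjection along which inequalities lift is the coequalizer of its kernel pair. For descent,
`f*` is faithful since `f` is surjective, and the algebra condition on a morphism
`φ : f*Y → f*Y'` says that the `Y'`-coordinate of `φ (y, a)` does not depend on `a`; so `φ`
descends to a map `Y → Y'`, which is monotone because inequalities lift.
-/

section PullbackPoints

variable {U V W : Preord.{u}} (f : U ⟶ W) (g : V ⟶ W)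

noncomputable def pullbackMk (x : U) (y : V) (h : f x = g y) : ↥(pullback f g) :=
  pullback.lift (Preord.ofHom (OrderHom.const PUnit.{u + 1} x))
    (Preord.ofHom (OrderHom.const PUnit.{u + 1} y)) (Preord.ext fun _ => h) PUnit.unit

@[simp]
theorem pullbackMk_fst (x : U) (y : V) (h : f x = g y) :
    pullback.fst f g (pullbackMk f g x y h) = x := by
  rw [pullbackMk, ← CategoryTheory.comp_apply, pullback.lift_fst]
  rfl

@[simp]
theorem pullbackMk_snd (x : U) (y : V) (h : f x = g y) :
    pullback.snd f g (pullbackMk f g x y h) = y := by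
  rw [pullbackMk, ← CategoryTheory.comp_apply, pullback.lift_snd]
  rfl

theorem pullback_condition_apply (p : ↥(pullback f g)) :
    f (pullback.fst f g p) = g (pullback.snd f g p) := by
  rw [← CategoryTheory.comp_apply, pullback.condition, CategoryTheory.comp_apply]

theorem pullback_ext {p q : ↥(pullback f g)} (h₁ : pullback.fst f g p = pullback.fst f g q)
    (h₂ : pullback.snd f g p = pullback.snd f g q) : p = q := by
  have := pullback.hom_ext (f := f) (g := g)
    (k := Preord.ofHom (OrderHom.const PUnit.{u + 1} p))
    (l := Preord.ofHom (OrderHom.const PUnit.{u + 1} q))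
    (Preord.ext fun _ => h₁) (Preord.ext fun _ => h₂)
  exact ConcreteCategory.congr_hom this PUnit.unit

end PullbackPoints

abbrev twoChain : Preord.{u} := Preord.of (ULift.{u} Bool)

def twoChainHom {U : Preord.{u}} {x₀ x₁ : U} (h : x₀ ≤ x₁) : twoChain.{u} ⟶ U :=
  Preord.ofHom ⟨fun i => bif i.down then x₁ else x₀, by
    rintro ⟨_ | _⟩ ⟨_ | _⟩ hij
    exacts [le_rfl, h, absurd hij (by decide), le_rfl]⟩

theorem pullback_le {U V W : Preord.{u}} {f : U ⟶ W} {g : V ⟶ W} {p q : ↥(pullback f g)}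
    (h₁ : pullback.fst f g p ≤ pullback.fst f g q)
    (h₂ : pullback.snd f g p ≤ pullback.snd f g q) : p ≤ q := by
  let l := pullback.lift (twoChainHom h₁) (twoChainHom h₂) <| Preord.ext fun
    | ⟨false⟩ => pullback_condition_apply f g p
    | ⟨true⟩ => pullback_condition_apply f g q
  have hl : ∀ i, l i = bif i.down then q else p := by
    rintro ⟨_ | _⟩ <;>
      exact pullback_ext f g (by rw [← CategoryTheory.comp_apply, pullback.lift_fst]; rfl)
        (by rw [← CategoryTheory.comp_apply, pullback.lift_snd]; rfl)
  simpa [hl] using l.hom.monotone (show (⟨false⟩ : twoChain.{u}) ≤ ⟨true⟩ by decide)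

theorem isIso_of_bijective_of_reflect_le {P Q : Preord.{u}} (h : P ⟶ Q)
    (hb : Function.Bijective h) (hle : ∀ x y, h x ≤ h y → x ≤ y) : IsIso h :=
  let e : P ≃o Q :=
    { Equiv.ofBijective h hb with map_rel_iff' := ⟨hle _ _, fun hxy => h.hom.monotone hxy⟩ }
  (Preord.Iso.mk e).isIso_hom

def HasLift {P Z : Preord.{u}} (h : P ⟶ Z) (z₀ z₁ : Z) : Prop :=
  ∃ p₀ p₁ : P, p₀ ≤ p₁ ∧ h p₀ = z₀ ∧ h p₁ = z₁

def LiftsLE {P Z : Preord.{u}} (h : P ⟶ Z) : Prop :=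
  ∀ z₀ z₁ : Z, z₀ ≤ z₁ → HasLift h z₀ z₁

section LiftsLE

variable {P Z : Preord.{u}} {h : P ⟶ Z}

theorem LiftsLE.surjective (hl : LiftsLE h) : Function.Surjective h := fun z =>
  let ⟨p, _, _, hp, _⟩ := hl z z le_rfl
  ⟨p, hp⟩

theorem LiftsLE.pullback_snd {V : Preord.{u}} (hl : LiftsLE h) (g : V ⟶ Z) :
    LiftsLE (pullback.snd h g) := by
  intro v₀ v₁ hv
  obtain ⟨p₀, p₁, hp, e₀, e₁⟩ := hl (g v₀) (g v₁) (g.hom.monotone hv)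
  exact ⟨pullbackMk h g p₀ v₀ e₀, pullbackMk h g p₁ v₁ e₁, pullback_le (by simpa) (by simpa),
    by simp, by simp⟩

theorem LiftsLE.isRegularEpi (hl : LiftsLE h) : IsRegularEpi h := by
  have := ConcreteCategory.epi_of_surjective h hl.surjective
  refine IsRegularEpi.of_epi_of_exists fun Q t ht => ?_
  have ht' : ∀ p p', h p = h p' → t p = t p' := fun p p' e => by
    simpa using ConcreteCategory.congr_hom ht (pullbackMk h h p p' e)
  let s := Function.surjInv hl.surjective
  have hs : ∀ p, t (s (h p)) = t p := fun p => ht' _ _ (Function.surjInv_eq _ _)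
  refine ⟨Preord.ofHom ⟨fun z => t (s z), fun z₀ z₁ hz => ?_⟩, Preord.ext fun p => hs p⟩
  obtain ⟨p₀, p₁, hp, rfl, rfl⟩ := hl z₀ z₁ hz
  simpa only [hs] using t.hom.monotone hp

end LiftsLE

section Graph

variable {Z : Preord.{u}} {Q : Type u} [Preorder Q] (φ : Z → Q)

def graph : Preord.{u} := Preord.of {x : Z × Q // φ x.1 = x.2}

def graphFst : graph φ ⟶ Z := Preord.ofHom ⟨fun x => x.1.1, fun _ _ h => h.1⟩

def graphMk (z : Z) : graph φ := ⟨(z, φ z), rfl⟩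

theorem graphFst_graphMk (z : Z) : graphFst φ (graphMk φ z) = z := rfl

theorem graphFst_injective : Function.Injective (graphFst φ) := fun x y (h : x.1.1 = y.1.1) =>
  Subtype.ext (Prod.ext h (by rw [← x.2, ← y.2, h]))

theorem monotone_of_graphFst_section (l : Z ⟶ graph φ) (hl : l ≫ graphFst φ = 𝟙 Z) :
    Monotone φ := by
  have hφ : ∀ z, φ z = (l z).1.2 := fun z => by
    rw [← (l z).2]
    exact congrArg φ (ConcreteCategory.congr_hom hl z).symm
  intro z₀ z₁ hz
  rw [hφ, hφ]
  exact (l.hom.monotone hz).2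

end Graph

theorem monotone_of_strongEpi {P Z : Preord.{u}} (h : P ⟶ Z) [StrongEpi h] {Q : Type u}
    [Preorder Q] (φ : Z → Q) (hφ : Monotone (φ ∘ h)) : Monotone φ := by
  have : Mono (graphFst φ) := ConcreteCategory.mono_of_injective _ (graphFst_injective φ)
  let e : P ⟶ graph φ := Preord.ofHom ⟨fun p => graphMk φ (h p),
    fun _ _ hpq => ⟨h.hom.monotone hpq, hφ hpq⟩⟩
  have sq : CommSq e h (graphFst φ) (𝟙 Z) := ⟨rfl⟩
  exact monotone_of_graphFst_section φ sq.lift sq.fac_right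

section LiftTest

variable {A B : Preord.{u}} (f : A ⟶ B)

def liftTest (b₀ b₁ : B) (i : twoChain.{u}) : ULift.{u} Prop :=
  ⟨i.down = true → HasLift f b₀ b₁⟩

theorem liftTest_le {b₀ b₁ : B} (hb : b₀ ≤ b₁) {i j : twoChain.{u}} {a a' : A} (ha : a ≤ a')
    (hi : f a = twoChainHom hb i) (hj : f a' = twoChainHom hb j) :
    liftTest f b₀ b₁ i ≤ liftTest f b₀ b₁ j := by
  rintro (hi' : i.down = true → _) (hj' : j.down = true)
  obtain ⟨_ | _⟩ := i
  · obtain ⟨_ | _⟩ := j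
    exacts [absurd hj' nofun, ⟨a, a', ha, hi, hj⟩]
  · exact hi' rfl

theorem HasLift.of_monotone_liftTest {b₀ b₁ : B} (h : Monotone (liftTest f b₀ b₁)) :
    HasLift f b₀ b₁ :=
  h (show (⟨false⟩ : twoChain.{u}) ≤ ⟨true⟩ by decide) nofun rfl

end LiftTest

section StableRegularEpi

variable {A B : Preord.{u}} (f : A ⟶ B)

theorem isStableRegularEpi_of_liftsLE (hf : LiftsLE f) : IsStableRegularEpi f := fun _ g =>
  have := (hf.pullback_snd g).isRegularEpi
  ⟨IsRegularEpi.getStruct _⟩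

theorem liftsLE_of_isStableRegularEpi (hf : IsStableRegularEpi f) : LiftsLE f := by
  intro b₀ b₁ hb
  have : IsRegularEpi (pullback.snd f (twoChainHom hb)) := isRegularEpi_of_regularEpi (hf _).some
  refine .of_monotone_liftTest f (monotone_of_strongEpi (pullback.snd f (twoChainHom hb)) _ ?_)
  intro p q hpq
  exact liftTest_le f hb ((pullback.fst f (twoChainHom hb)).hom.monotone hpq)
    (pullback_condition_apply _ _ p) (pullback_condition_apply _ _ q)

end StableRegularEpi

section Descent

variable {A B : Preord.{u}} (f : A ⟶ B)

local notation "𝐊" => Monad.comparison (Over.mapPullbackAdj f)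
local notation "𝐓" => Adjunction.toMonad (Over.mapPullbackAdj f)

theorem pullback_map_left_fst {Y Y' : Over B} (u : Y ⟶ Y') (p : ↥(pullback Y.hom f)) :
    pullback.fst Y'.hom f (((Over.pullback f).map u).left p) =
      u.left (pullback.fst Y.hom f p) := by
  have : ((Over.pullback f).map u).left ≫ pullback.fst Y'.hom f =
      pullback.fst Y.hom f ≫ u.left := by
    simp only [Over.pullback_map_left]
    erw [pullback.lift_fst]
  rw [← CategoryTheory.comp_apply, this, CategoryTheory.comp_apply]

theorem pullback_map_left_snd {Y Y' : Over B} (u : Y ⟶ Y') (p : ↥(pullback Y.hom f)) :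
    pullback.snd Y'.hom f (((Over.pullback f).map u).left p) = pullback.snd Y.hom f p :=
  ConcreteCategory.congr_hom (Over.w ((Over.pullback f).map u)) p

theorem comparison_hom_snd {Y Y' : Over B}
    (φ : (𝐊).obj Y ⟶ (𝐊).obj Y') (p : ↥(pullback Y.hom f)) :
    pullback.snd Y'.hom f (φ.f.left p) = pullback.snd Y.hom f p :=
  ConcreteCategory.congr_hom (Over.w φ.f) p

theorem comparison_obj_a_fst (Z : Over B) (r : ↥((𝐓).obj ((𝐊).obj Z).A).left) :
    pullback.fst Z.hom f (((𝐊).obj Z).a.left r) =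
      pullback.fst Z.hom f (pullback.fst ((Over.map f).obj ((Over.pullback f).obj Z)).hom f r) := by
  erw [pullback_map_left_fst]
  simp

theorem comparison_hom_fst_congr {Y Y' : Over B}
    (φ : (𝐊).obj Y ⟶ (𝐊).obj Y') {p p' : ↥(pullback Y.hom f)}
    (e : pullback.fst Y.hom f p = pullback.fst Y.hom f p') :
    pullback.fst Y'.hom f (φ.f.left p) = pullback.fst Y'.hom f (φ.f.left p') := by
  have hq : ((Over.map f).obj ((Over.pullback f).obj Y)).hom p = f (pullback.snd Y.hom f p') := by
    erw [CategoryTheory.comp_apply, ← pullback_condition_apply, e, pullback_condition_apply]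
  -- The algebra structure of `𝐊 Y` sends `q = (p, snd p')` to `p'`, so the algebra-morphism
  -- square of `φ`, evaluated at `q`, compares `φ p'` with `φ p`.
  let q : ↥((𝐓).obj ((𝐊).obj Y).A).left := pullbackMk _ f p _ hq
  have hq' : ((𝐊).obj Y).a.left q = p' := by
    apply pullback_ext
    · erw [comparison_obj_a_fst, pullbackMk_fst]
      exact e
    · erw [pullback_map_left_snd, pullbackMk_snd]
  have hφ := ConcreteCategory.congr_hom (congrArg Over.Hom.left φ.h) q
  simp only [Over.comp_left, CategoryTheory.comp_apply, hq'] at hφ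
  rw [← hφ]
  erw [comparison_obj_a_fst, pullback_map_left_fst, pullbackMk_fst]
  rfl

theorem pullback_fst_surjective (hf : Function.Surjective f) {Z : Preord.{u}} (g : Z ⟶ B) :
    Function.Surjective (pullback.fst g f) := fun z =>
  let ⟨a, ha⟩ := hf (g z)
  ⟨pullbackMk g f z a ha.symm, pullbackMk_fst _ _ _ _ _⟩

theorem pullback_faithful_of_surjective (hf : Function.Surjective f) :
    (Over.pullback f).Faithful :=
  have := fun (Z : Preord.{u}) (g : Z ⟶ B) =>
    ConcreteCategory.epi_of_surjective _ (pullback_fst_surjective f hf g)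
  inferInstance

theorem comparison_full_of_liftsLE (hf : LiftsLE f) : (𝐊).Full where
  map_surjective {Y Y'} φ := by
    have hs := pullback_fst_surjective f hf.surjective Y.hom
    let g : Y.left → Y'.left := fun y => pullback.fst Y'.hom f (φ.f.left (Function.surjInv hs y))
    have hg : ∀ p, g (pullback.fst Y.hom f p) = pullback.fst Y'.hom f (φ.f.left p) := fun p =>
      comparison_hom_fst_congr f φ (Function.surjInv_eq hs _)
    have hmono : Monotone g := by
      intro y y' hy
      obtain ⟨a, a', ha, e, e'⟩ := hf (Y.hom y) (Y.hom y') (Y.hom.hom.monotone hy)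
      rw [← pullbackMk_fst Y.hom f y a e.symm, ← pullbackMk_fst Y.hom f y' a' e'.symm, hg, hg]
      exact (pullback.fst Y'.hom f).hom.monotone
        (φ.f.left.hom.monotone (pullback_le (by simpa) (by simpa)))
    have hover : Preord.ofHom ⟨g, hmono⟩ ≫ Y'.hom = Y.hom := Preord.ext fun y => by
      obtain ⟨p, rfl⟩ := hs y
      change Y'.hom (g _) = _
      rw [hg]
      exact (pullback_condition_apply Y'.hom f _).trans
        ((congrArg f (comparison_hom_snd f φ p)).trans (pullback_condition_apply Y.hom f p).symm)
    refine ⟨Over.homMk (Preord.ofHom ⟨g, hmono⟩) hover, Monad.Algebra.Hom.ext ?_⟩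
    ext p
    apply pullback_ext
    · erw [pullback_map_left_fst]
      exact hg p
    · erw [pullback_map_left_snd, comparison_hom_snd]

theorem isDescentMorphism_of_liftsLE (hf : LiftsLE f) : IsDescentMorphism f :=
  have := pullback_faithful_of_surjective f hf.surjective
  ⟨comparison_full_of_liftsLE f hf, inferInstance⟩

theorem isIso_of_isIso_pullback_map (hf : IsDescentMorphism f) {Y Y' : Over B} (m : Y ⟶ Y')
    [IsIso ((Over.pullback f).map m)] : IsIso m := by
  obtain ⟨_, _⟩ := hf
  have : IsIso ((𝐓).forget.map ((𝐊).map m)) := inferInstanceAs (IsIso ((Over.pullback f).map m))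
  have : IsIso ((𝐊).map m) := isIso_of_reflects_iso _ (𝐓).forget
  exact isIso_of_reflects_iso m 𝐊

-- The graph of `liftTest f b₀ b₁` is the chain `0, 1` with `0 ≤ 1` iff `b₀ ≤ b₁` lifts along `f`.
def liftTestGraphHom {b₀ b₁ : B} (hb : b₀ ≤ b₁) :
    Over.mk (graphFst (liftTest f b₀ b₁) ≫ twoChainHom hb) ⟶ Over.mk (twoChainHom hb) :=
  Over.homMk (graphFst (liftTest f b₀ b₁))

theorem isIso_pullback_map_liftTestGraphHom {b₀ b₁ : B} (hb : b₀ ≤ b₁) :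
    IsIso ((Over.pullback f).map (liftTestGraphHom f hb)) := by
  let φ := liftTest f b₀ b₁
  let m := (Over.pullback f).map (liftTestGraphHom f hb)
  have hfst : ∀ p, pullback.fst _ f (m.left p) = graphFst φ (pullback.fst _ f p) :=
    pullback_map_left_fst f _
  have hsnd : ∀ p, pullback.snd _ f (m.left p) = pullback.snd _ f p :=
    pullback_map_left_snd f _
  have : IsIso ((Over.forget A).map m) := by
    refine isIso_of_bijective_of_reflect_le m.left ⟨fun p p' h => ?_, fun r => ?_⟩
      fun p p' h => ?_
    · apply pullback_ext
      · apply graphFst_injective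
        rw [← hfst, ← hfst, h]
      · rw [← hsnd, ← hsnd, h]
    · refine ⟨pullbackMk _ f (graphMk φ (pullback.fst _ f r)) (pullback.snd _ f r)
        (pullback_condition_apply _ f r), pullback_ext _ f ?_ ?_⟩
      · erw [hfst, pullbackMk_fst, graphFst_graphMk]
      · erw [hsnd, pullbackMk_snd]
    · have h₁ := (pullback.fst _ f).hom.monotone h
      have h₂ := (pullback.snd _ f).hom.monotone h
      rw [hfst, hfst] at h₁
      rw [hsnd, hsnd] at h₂
      refine pullback_le ⟨h₁, ?_⟩ h₂
      rw [← (pullback.fst _ f p).2, ← (pullback.fst _ f p').2]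
      exact liftTest_le f hb h₂ (pullback_condition_apply _ f p).symm
        (pullback_condition_apply _ f p').symm
  exact isIso_of_reflects_iso _ (Over.forget A)

theorem liftsLE_of_isDescentMorphism (hf : IsDescentMorphism f) : LiftsLE f := by
  intro b₀ b₁ hb
  have := isIso_pullback_map_liftTestGraphHom f hb
  have := isIso_of_isIso_pullback_map f hf (liftTestGraphHom f hb)
  have : IsIso (graphFst (liftTest f b₀ b₁)) :=
    inferInstanceAs (IsIso ((Over.forget B).map (liftTestGraphHom f hb)))
  exact .of_monotone_liftTest f
    (monotone_of_graphFst_section _ (inv (graphFst _)) (IsIso.inv_hom_id _))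

end Descent

/-- **Theorem (Janelidze–Sobral).** A morphism `f : A ⟶ B` in `Ord` is a descent morphism,
equivalently a pullback-stable regular epimorphism, iff every `b₀ ≤ b₁` in `B` lifts to some
`a₀ ≤ a₁` in `A`. -/
theorem statement1 {A B : Preord.{u}} (f : A ⟶ B) :
    (IsDescentMorphism f ↔
      (∀ b₀ b₁ : ↥B, b₀ ≤ b₁ → ∃ a₀ a₁ : ↥A, a₀ ≤ a₁ ∧ f a₀ = b₀ ∧ f a₁ = b₁)) ∧
    (IsStableRegularEpi f ↔
      (∀ b₀ b₁ : ↥B, b₀ ≤ b₁ → ∃ a₀ a₁ : ↥A, a₀ ≤ a₁ ∧ f a₀ = b₀ ∧ f a₁ = b₁)) :=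
  ⟨⟨liftsLE_of_isDescentMorphism f, isDescentMorphism_of_liftsLE f⟩,
    ⟨liftsLE_of_isStableRegularEpi f, isStableRegularEpi_of_liftsLE f⟩⟩

end Desc
end

section
/- A morphism f : A → B in Ord is an effective descent morphism if and only if for all b₀ ≤ b₁ ≤ b₂ in B there exist a₀ ≤ a₁ ≤ a₂ in A with f(a₀) = b₀, f(a₁) = b₁ and f(a₂) = b₂. -/
open CategoryTheory Limits

universe u
universe u₁ v₁ u₂ v₂

attribute [local instance] CategoryTheory.ConcreteCategory.instFunLike

namespace Desc

variable (X : Type u) [Preorder X]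

variable {X}

variable {X : Type u} [Preorder X]

variable (X : Type u) [Preorder X]

/-!
Base change along `f` is computed concretely as the fibre product `A ×_B D`; it has the same left
adjoint `f_!` as `Over.pullback f`, so the two comparison functors are equivalences together.
An algebra `W` for the induced monad is an ordered set over `A` with an action transporting
`e ∈ W` to any `x ∈ A` with `f x = f (π e)`. Its orbits are the only candidate for the descended
object `D`, ordered by `[e] ≤ [e']` iff `e ≤ e'` for some representatives. `W` descends as soon
as this relation is transitive, which is what the lifting of chains `b₀ ≤ b₁ ≤ b₂` provides;
surjectivity and the lifting of pairs `b₀ ≤ b₁` make the comparison functor fully faithful.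

Conversely, `f*` reflects isomorphisms, so it must distinguish the discrete and the linearly
ordered pair over `b₀ ≤ b₁`: pairs lift. Given the lifts of `b₀ ≤ b₁`, `b₁ ≤ b₂` and `b₀ ≤ b₂`
but no lift of the triple, the elements over `b₀, b₁, b₂` ordered by steps of index at most one
form an algebra. It descends, so its orbit relation is transitive, and transitivity forces a
forbidden step from index 0 to index 2.
-/

section SameLeftAdjoint

variable {C : Type u₁} [Category.{v₁} C] {D : Type u₂} [Category.{v₂} D] {L : C ⥤ D} {R R' : D ⥤ C}

def monadIsoOfSameLeftAdjoint (adj : L ⊣ R) (adj' : L ⊣ R') : adj.toMonad ≅ adj'.toMonad :=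
  MonadIso.mk (Functor.isoWhiskerLeft L (adj.rightAdjointUniq adj'))
    (fun Y => adj.unit_rightAdjointUniq_hom_app adj' Y)
    (fun Y => by
      dsimp [Adjunction.toMonad]
      rw [Category.assoc, NatTrans.naturality_assoc, ← R'.map_comp,
        Adjunction.rightAdjointUniq_hom_app_counit]
      exact NatTrans.naturality _ _)

theorem comparison_isEquivalence_of_sameLeftAdjoint (adj : L ⊣ R) (adj' : L ⊣ R')
    [(Monad.comparison adj).IsEquivalence] : (Monad.comparison adj').IsEquivalence := by
  let e := adj.rightAdjointUniq adj'
  have : Monad.comparison adj ⋙ (Monad.algebraEquivOfIsoMonads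
      (monadIsoOfSameLeftAdjoint adj adj')).functor ≅ Monad.comparison adj' :=
    NatIso.ofComponents (fun Y => Monad.Algebra.isoMk (e.app Y) (by
        change R'.map (L.map (e.hom.app Y)) ≫ R'.map (adj'.counit.app Y) =
          (e.inv.app (L.obj (R.obj Y)) ≫ R.map (adj.counit.app Y)) ≫ e.hom.app Y
        rw [← R'.map_comp, Adjunction.rightAdjointUniq_hom_app_counit]
        simp [e]))
      (fun g => Monad.Algebra.Hom.ext (e.hom.naturality g))
  exact Functor.isEquivalence_of_iso this

theorem comparison_isEquivalence_iff_of_sameLeftAdjoint (adj : L ⊣ R) (adj' : L ⊣ R') :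
    (Monad.comparison adj).IsEquivalence ↔ (Monad.comparison adj').IsEquivalence :=
  ⟨fun _ => comparison_isEquivalence_of_sameLeftAdjoint adj adj',
    fun _ => comparison_isEquivalence_of_sameLeftAdjoint adj' adj⟩

end SameLeftAdjoint

section BaseChange

lemma over_w_apply {P : Preord.{u}} {D D' : Over P} (h : D ⟶ D') (x : D.left) :
    D'.hom (h.left x) = D.hom x :=
  ConcreteCategory.congr_hom (Over.w h) x

lemma over_hom_ext {P : Preord.{u}} {D D' : Over P} {h h' : D ⟶ D'}
    (w : ∀ x, h.left x = h'.left x) : h = h' :=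
  Over.OverMorphism.ext (Preord.ext w)

lemma over_congr_apply {P : Preord.{u}} {D D' : Over P} {h h' : D ⟶ D'} (e : h = h')
    (x : D.left) : h.left x = h'.left x := by
  rw [e]

variable {A B : Preord.{u}} (f : A ⟶ B)

def FiberProduct (D : Over B) : Type u := {p : A × D.left // f p.1 = D.hom p.2}

instance (D : Over B) : Preorder (FiberProduct f D) :=
  inferInstanceAs (Preorder {p : A × D.left // f p.1 = D.hom p.2})

def FiberProduct.fst {D : Over B} : Preord.of (FiberProduct f D) ⟶ A :=
  Preord.ofHom ⟨fun p => p.1.1, fun _ _ h => h.1⟩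

def FiberProduct.snd {D : Over B} : Preord.of (FiberProduct f D) ⟶ D.left :=
  Preord.ofHom ⟨fun p => p.1.2, fun _ _ h => h.2⟩

def baseChange : Over B ⥤ Over A where
  obj D := Over.mk (FiberProduct.fst f)
  map {D D'} h := Over.homMk
    (Preord.ofHom ⟨fun p => ⟨(p.1.1, h.left p.1.2), p.2.trans (over_w_apply h p.1.2).symm⟩,
      fun _ _ hle => ⟨hle.1, h.left.hom.monotone hle.2⟩⟩ :
        Preord.of (FiberProduct f D) ⟶ Preord.of (FiberProduct f D')) rfl

def mapBaseChangeAdj : Over.map f ⊣ baseChange f :=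
  Adjunction.mkOfHomEquiv
    { homEquiv := fun E D =>
        { toFun := fun g => Over.homMk
            (Preord.ofHom ⟨fun e => ⟨(E.hom e, g.left e), (over_w_apply g e).symm⟩,
              fun _ _ h => ⟨E.hom.hom.monotone h, g.left.hom.monotone h⟩⟩ :
                E.left ⟶ Preord.of (FiberProduct f D)) rfl
          invFun := fun k => Over.homMk (k.left ≫ FiberProduct.snd f)
            (Preord.ext fun e => (k.left e).2.symm.trans (congrArg f (over_w_apply k e)))
          left_inv := fun _ => rfl
          right_inv := fun k => over_hom_ext fun e =>
            Subtype.ext (Prod.ext (over_w_apply k e).symm rfl) }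
      homEquiv_naturality_left_symm := fun _ _ => rfl
      homEquiv_naturality_right := fun _ _ => rfl }

end BaseChange

section Comparison

variable {A B : Preord.{u}} {f : A ⟶ B}

def LiftsPairs (f : A ⟶ B) : Prop :=
  ∀ b₀ b₁ : B, b₀ ≤ b₁ → ∃ a₀ a₁ : A, a₀ ≤ a₁ ∧ f a₀ = b₀ ∧ f a₁ = b₁

def LiftsTriples (f : A ⟶ B) : Prop :=
  ∀ b₀ b₁ b₂ : B, b₀ ≤ b₁ → b₁ ≤ b₂ →
    ∃ a₀ a₁ a₂ : A, a₀ ≤ a₁ ∧ a₁ ≤ a₂ ∧ f a₀ = b₀ ∧ f a₁ = b₁ ∧ f a₂ = b₂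

lemma LiftsTriples.liftsPairs (hf : LiftsTriples f) : LiftsPairs f := fun b₀ b₁ h => by
  obtain ⟨a₀, a₁, -, ha, -, h₀, h₁, -⟩ := hf b₀ b₁ b₁ h le_rfl
  exact ⟨a₀, a₁, ha, h₀, h₁⟩

lemma LiftsPairs.surjective (hf : LiftsPairs f) : Function.Surjective f := fun b => by
  obtain ⟨a, -, -, h, -⟩ := hf b b le_rfl
  exact ⟨a, h⟩

lemma baseChange_faithful (hf : Function.Surjective f) : (baseChange f).Faithful where
  map_injective {D₁ _} {h₁ h₂} e := over_hom_ext fun d => by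
    obtain ⟨a, ha⟩ := hf (D₁.hom d)
    exact congrArg (fun p : FiberProduct f _ => p.1.2) (over_congr_apply e ⟨(a, d), ha⟩)

lemma comparison_full (hf : LiftsPairs f) : (Monad.comparison (mapBaseChangeAdj f)).Full where
  map_surjective {D₁ D₂} g := by
    have fst_eq (p : FiberProduct f D₁) : (g.f.left p).1.1 = p.1.1 := over_w_apply g.f p
    -- `g` commutes with the algebra structures, so the `D₂`-component ignores the `A`-component
    have snd_eq (x a : A) (d : D₁.left) (hx : f x = D₁.hom d) (ha : f a = D₁.hom d) :
        (g.f.left ⟨(x, d), hx⟩).1.2 = (g.f.left ⟨(a, d), ha⟩).1.2 :=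
      (congrArg (fun p : FiberProduct f D₂ => p.1.2)
        (over_congr_apply g.h ⟨(x, ⟨(a, d), ha⟩), hx.trans ha.symm⟩)).symm
    choose s hs using hf.surjective
    let k (d : D₁.left) : D₂.left := (g.f.left ⟨(s (D₁.hom d), d), hs _⟩).1.2
    have k_mono : Monotone k := fun d d' hd => by
      obtain ⟨a₀, a₁, ha, h₀, h₁⟩ := hf _ _ (D₁.hom.hom.monotone hd)
      calc k d = (g.f.left ⟨(a₀, d), h₀⟩).1.2 := snd_eq _ _ _ _ _
        _ ≤ (g.f.left ⟨(a₁, d'), h₁⟩).1.2 := (g.f.left.hom.monotone ⟨ha, hd⟩).2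
        _ = k d' := snd_eq _ _ _ _ _
    have k_over (d : D₁.left) : D₂.hom (k d) = D₁.hom d :=
      (g.f.left _).2.symm.trans ((congrArg f (fst_eq _)).trans (hs _))
    refine ⟨Over.homMk (Preord.ofHom ⟨k, k_mono⟩ : D₁.left ⟶ D₂.left) (Preord.ext k_over),
      Monad.Algebra.Hom.ext (over_hom_ext fun p => ?_)⟩
    exact Subtype.ext (Prod.ext (fst_eq p).symm (snd_eq _ _ _ p.2 _).symm)

end Comparison

section Algebra

variable {A B : Preord.{u}} {f : A ⟶ B} (W : (mapBaseChangeAdj f).toMonad.Algebra)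

def act (x : A) (e : W.A.left) (h : f x = f (W.A.hom e)) : W.A.left :=
  W.a.left (show FiberProduct f ((Over.map f).obj W.A) from ⟨(x, e), h⟩)

variable {W}

lemma hom_act (x : A) (e : W.A.left) (h) : W.A.hom (act W x e h) = x :=
  over_w_apply W.a _

lemma act_hom_self (e : W.A.left) (h) : act W (W.A.hom e) e h = e :=
  over_congr_apply W.unit e

lemma act_act (x y : A) (e : W.A.left) (h : f x = f (W.A.hom e)) (hy : f y = f x) {h' h''} :
    act W y (act W x e h) h' = act W y e h'' :=
  (over_congr_apply W.assoc (show ((mapBaseChangeAdj f).toMonad.obj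
    ((mapBaseChangeAdj f).toMonad.obj W.A)).left from ⟨(y, ⟨(x, e), h⟩), hy⟩)).symm

lemma act_mono {x x' : A} {e e' : W.A.left} {h h'} (hx : x ≤ x') (he : e ≤ e') :
    act W x e h ≤ act W x' e' h' :=
  W.a.left.hom.monotone ⟨hx, he⟩

lemma act_congr {x x' : A} {e : W.A.left} (hx : x = x') {h h'} : act W x e h = act W x' e h' := by
  subst hx; rfl

variable (W)

def ActRel (e e' : W.A.left) : Prop :=
  ∃ x h, act W x e h = e'

variable {W}

lemma ActRel.map_eq {e e' : W.A.left} (r : ActRel W e e') : f (W.A.hom e) = f (W.A.hom e') := by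
  obtain ⟨x, h, rfl⟩ := r
  rw [hom_act, h]

def actSetoid (W : (mapBaseChangeAdj f).toMonad.Algebra) : Setoid W.A.left where
  r := ActRel W
  iseqv :=
    { refl e := ⟨_, rfl, act_hom_self e rfl⟩
      symm := by
        rintro e _ ⟨x, h, rfl⟩
        exact ⟨W.A.hom e, by rw [hom_act, h], (act_act _ _ _ h h.symm).trans (act_hom_self e rfl)⟩
      trans := by
        rintro e _ _ ⟨x, h, rfl⟩ ⟨y, h', rfl⟩
        exact ⟨y, h'.trans (by rw [hom_act, h]), (act_act _ _ _ h (by rwa [hom_act] at h')).symm⟩ }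

variable (W)

def DescentQuot : Type u := Quotient (actSetoid W)

def DescentQuot.mk (e : W.A.left) : DescentQuot W := Quotient.mk (actSetoid W) e

def descentLE : DescentQuot W → DescentQuot W → Prop :=
  Relation.Map (· ≤ ·) (DescentQuot.mk W) (DescentQuot.mk W)

variable {W}

lemma DescentQuot.mk_act (x : A) (e : W.A.left) (h) : mk W (act W x e h) = mk W e :=
  Quotient.sound' ((actSetoid W).iseqv.symm ⟨x, h, rfl⟩)

lemma act_eq_act_of_mk_eq {e e' : W.A.left} (he : DescentQuot.mk W e = DescentQuot.mk W e')
    (x : A) {h h'} : act W x e h = act W x e' h' := by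
  obtain ⟨y, hy, rfl⟩ : ActRel W e e' := Quotient.exact' he
  exact (act_act _ _ _ hy (by rwa [hom_act] at h')).symm

lemma le_of_descentLE {e e' : W.A.left} (h : W.A.hom e ≤ W.A.hom e')
    (hd : descentLE W (.mk W e) (.mk W e')) : e ≤ e' := by
  obtain ⟨e₁, e₁', h₁, he, he'⟩ := hd
  calc e = act W (W.A.hom e) e₁ (by rw [(Quotient.exact' he).map_eq]) :=
        (act_eq_act_of_mk_eq he _).trans (act_hom_self e rfl) |>.symm
    _ ≤ act W (W.A.hom e') e₁' (by rw [(Quotient.exact' he').map_eq]) := act_mono h h₁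
    _ = e' := (act_eq_act_of_mk_eq he' _).trans (act_hom_self e' rfl)

lemma descentLE_mk_of_le {e e' : W.A.left} (h : e ≤ e') : descentLE W (.mk W e) (.mk W e') :=
  ⟨e, e', h, rfl, rfl⟩

end Algebra

section EssImage

variable {A B : Preord.{u}} {f : A ⟶ B} {W : (mapBaseChangeAdj f).toMonad.Algebra}

abbrev descentPreorder (htrans : IsTrans (DescentQuot W) (descentLE W)) :
    Preorder (DescentQuot W) where
  le := descentLE W
  le_refl := Quotient.ind fun _ => descentLE_mk_of_le le_rfl
  le_trans _ _ _ := htrans.trans _ _ _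

def descentObj (htrans : IsTrans (DescentQuot W) (descentLE W)) : Over B :=
  letI := descentPreorder htrans
  Over.mk (Preord.ofHom
    ⟨Quotient.lift (fun e => f (W.A.hom e)) fun _ _ r => r.map_eq, by
      rintro _ _ ⟨e, e', h, rfl, rfl⟩
      exact f.hom.monotone (W.A.hom.hom.monotone h)⟩ : Preord.of (DescentQuot W) ⟶ B)

def toDescentObj (htrans : IsTrans (DescentQuot W) (descentLE W)) (e : W.A.left) :
    FiberProduct f (descentObj htrans) :=
  ⟨(W.A.hom e, .mk W e), rfl⟩

lemma toDescentObj_bijective (htrans : IsTrans (DescentQuot W) (descentLE W)) :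
    Function.Bijective (toDescentObj htrans) := by
  refine ⟨fun e e' he => ?_, fun ⟨⟨x, c⟩, hx⟩ => ?_⟩
  · obtain ⟨x, h, rfl⟩ : ActRel W e e' := Quotient.exact' (congrArg (fun p => p.1.2) he)
    have hx : W.A.hom e = x := (congrArg (fun p => p.1.1) he).trans (hom_act x e h)
    exact ((act_congr hx.symm).trans (act_hom_self e rfl)).symm
  · induction c using Quotient.ind with | _ e =>
    exact ⟨act W x e hx, Subtype.ext (Prod.ext (hom_act x e hx) (DescentQuot.mk_act x e hx))⟩

noncomputable def descentOrderIso (htrans : IsTrans (DescentQuot W) (descentLE W)) :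
    W.A.left ≃o FiberProduct f (descentObj htrans) where
  toEquiv := Equiv.ofBijective _ (toDescentObj_bijective htrans)
  map_rel_iff' :=
    ⟨fun h => le_of_descentLE h.1 h.2, fun h => ⟨W.A.hom.hom.monotone h, descentLE_mk_of_le h⟩⟩

lemma mem_essImage_of_isTrans (htrans : IsTrans (DescentQuot W) (descentLE W)) :
    (Monad.comparison (mapBaseChangeAdj f)).essImage W := by
  refine ⟨descentObj htrans, ⟨(Monad.Algebra.isoMk
    (Over.isoMk (Preord.Iso.mk (descentOrderIso htrans)) (Preord.ext fun _ => rfl)) ?_).symm⟩⟩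
  exact over_hom_ext fun p => Subtype.ext
    (Prod.ext (hom_act _ _ p.2).symm (DescentQuot.mk_act _ _ p.2).symm)

lemma isTrans_descentLE_of_liftsTriples (hf : LiftsTriples f) :
    IsTrans (DescentQuot W) (descentLE W) := by
  constructor
  rintro _ _ _ ⟨e₁, e₂, h₁₂, rfl, rfl⟩ ⟨e₂', e₃, h₂₃, he₂, rfl⟩
  obtain ⟨a₀, a₁, a₂, ha₀₁, ha₁₂, h₀, h₁, h₂⟩ := hf _ _ (f (W.A.hom e₃))
    (f.hom.monotone (W.A.hom.hom.monotone h₁₂))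
    ((Quotient.exact' he₂).map_eq ▸ f.hom.monotone (W.A.hom.hom.monotone h₂₃))
  refine ⟨act W a₀ e₁ h₀, act W a₂ e₃ h₂, ?_, DescentQuot.mk_act _ _ _, DescentQuot.mk_act _ _ _⟩
  calc act W a₀ e₁ h₀ ≤ act W a₁ e₂ h₁ := act_mono ha₀₁ h₁₂
    _ = act W a₁ e₂' (h₁.trans (Quotient.exact' he₂).map_eq.symm) := act_eq_act_of_mk_eq he₂.symm _
    _ ≤ act W a₂ e₃ h₂ := act_mono ha₁₂ h₂₃

lemma isTrans_descentLE_of_mem_essImage (hf : LiftsPairs f)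
    (hW : (Monad.comparison (mapBaseChangeAdj f)).essImage W) :
    IsTrans (DescentQuot W) (descentLE W) := by
  obtain ⟨D, ⟨i⟩⟩ := hW
  let φ := i.inv.f.left
  have φ_fst (e : W.A.left) : (φ e).1.1 = W.A.hom e := over_w_apply i.inv.f e
  have φ_act (x : A) (e : W.A.left) (h) : (φ (act W x e h)).1.2 = (φ e).1.2 :=
    (congrArg (fun p : FiberProduct f D => p.1.2) (over_congr_apply i.inv.h ⟨(x, e), h⟩)).symm
  have φ_reflect {e e' : W.A.left} (h : φ e ≤ φ e') : e ≤ e' := by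
    have hφ (e : W.A.left) : i.hom.f.left (φ e) = e :=
      over_congr_apply (congrArg Monad.Algebra.Hom.f i.inv_hom_id) e
    rw [← hφ e, ← hφ e']
    exact i.hom.f.left.hom.monotone h
  -- `descentLE` is the order of `D` read through the `D`-component of `φ`
  let d : DescentQuot W → D.left :=
    Quotient.lift (fun e => (φ e).1.2) fun _ _ ⟨x, h, he⟩ => he ▸ (φ_act x _ h).symm
  have descentLE_iff (c c' : DescentQuot W) : descentLE W c c' ↔ d c ≤ d c' := by
    refine ⟨fun ⟨e, e', h, hc, hc'⟩ => hc ▸ hc' ▸ (φ.hom.monotone h).2, fun hd => ?_⟩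
    induction c using Quotient.ind with | _ e =>
    induction c' using Quotient.ind with | _ e' =>
    have hb : f (W.A.hom e) ≤ f (W.A.hom e') := by
      rw [← φ_fst, ← φ_fst, (φ e).2, (φ e').2]
      exact D.hom.hom.monotone hd
    obtain ⟨a₀, a₁, ha, h₀, h₁⟩ := hf _ _ hb
    refine ⟨act W a₀ e h₀, act W a₁ e' h₁, φ_reflect ⟨?_, ?_⟩,
      DescentQuot.mk_act _ _ _, DescentQuot.mk_act _ _ _⟩
    · simpa only [φ_fst, hom_act] using ha
    · rw [φ_act, φ_act]
      exact hd
  exact ⟨fun c c' c'' h h' =>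
    (descentLE_iff c c'').2 (((descentLE_iff c c').1 h).trans ((descentLE_iff c' c'').1 h'))⟩

end EssImage

section StepChain

variable {A B : Preord.{u}} (f : A ⟶ B) (b : Fin 3 → B)

def StepChain : Type u := {p : A × Fin 3 // f p.1 = b p.2}

variable {f b}
variable (hnolift : ∀ a₀ a₁ a₂ : A, a₀ ≤ a₁ → a₁ ≤ a₂ → f a₀ = b 0 → f a₁ = b 1 → f a₂ ≠ b 2)

abbrev StepChain.preorder : Preorder (StepChain f b) where
  le p q := p.1.1 ≤ q.1.1 ∧ p.1.2 ≤ q.1.2 ∧ (q.1.2 : ℕ) ≤ p.1.2 + 1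
  le_refl p := ⟨le_rfl, le_rfl, by omega⟩
  le_trans p q r hpq hqr := by
    refine ⟨hpq.1.trans hqr.1, hpq.2.1.trans hqr.2.1, ?_⟩
    by_contra hlt
    have hpq' := Fin.le_def.1 hpq.2.1
    have hqr' := Fin.le_def.1 hqr.2.1
    have hr₃ := r.1.2.is_lt
    have hp : p.1.2 = 0 := Fin.ext (by omega)
    have hq : q.1.2 = 1 := Fin.ext (by simp only [Fin.isValue, Fin.val_one]; omega)
    have hr : r.1.2 = 2 := Fin.ext (by simp only [Fin.isValue, Fin.val_two]; omega)
    exact hnolift _ _ _ hpq.1 hqr.1 (hp ▸ p.2) (hq ▸ q.2) (hr ▸ r.2)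

def stepChainAlgebra : (mapBaseChangeAdj f).toMonad.Algebra :=
  letI := StepChain.preorder hnolift
  { A := Over.mk (Preord.ofHom ⟨fun p => p.1.1, fun _ _ h => h.1⟩ : Preord.of (StepChain f b) ⟶ A)
    a := Over.homMk (Preord.ofHom ⟨fun w => ⟨(w.1.1, w.1.2.1.2), w.2.trans w.1.2.2⟩,
      fun _ _ h => ⟨h.1, h.2.2⟩⟩) rfl
    unit := over_hom_ext fun _ => rfl
    assoc := over_hom_ext fun _ => rfl }

lemma stepChainAlgebra_mk_eq_mk {e e' : (stepChainAlgebra hnolift).A.left} (h : e.1.2 = e'.1.2) :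
    DescentQuot.mk _ e = DescentQuot.mk _ e' :=
  Quotient.sound' ⟨e'.1.1, e'.2.trans (h ▸ e.2).symm, Subtype.ext (Prod.ext rfl h)⟩

end StepChain

section Necessity

variable {A B : Preord.{u}} {f : A ⟶ B}

lemma Preord.isIso_of_bijective_of_reflect {P Q : Preord.{u}} (g : P ⟶ Q)
    (hg : Function.Bijective g) (hle : ∀ x y, g x ≤ g y → x ≤ y) : IsIso g :=
  (Preord.Iso.mk
    { Equiv.ofBijective g hg with map_rel_iff' := ⟨hle _ _, fun h => g.hom.monotone h⟩ }).isIso_hom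

lemma isIso_baseChange_map {D D' : Over B} (h : D ⟶ D') (hbij : Function.Bijective h.left)
    (hle : ∀ p q : FiberProduct f D, p.1.1 ≤ q.1.1 → h.left p.1.2 ≤ h.left q.1.2 → p.1.2 ≤ q.1.2) :
    IsIso ((baseChange f).map h) := by
  suffices IsIso ((Over.forget A).map ((baseChange f).map h)) from
    isIso_of_reflects_iso _ (Over.forget A)
  refine Preord.isIso_of_bijective_of_reflect _ ⟨fun p q hpq => ?_, fun ⟨⟨a, d'⟩, ha⟩ => ?_⟩
    fun p q hpq => ⟨hpq.1, hle p q hpq.1 hpq.2⟩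
  · have : (p.1.1, h.left p.1.2) = (q.1.1, h.left q.1.2) := congrArg Subtype.val hpq
    obtain ⟨h₁, h₂⟩ := Prod.ext_iff.1 this
    exact Subtype.ext (Prod.ext h₁ (hbij.1 h₂))
  · obtain ⟨d, rfl⟩ := hbij.2 d'
    exact ⟨⟨(a, d), ha.trans (over_w_apply h d)⟩, rfl⟩

instance [(Monad.comparison (mapBaseChangeAdj f)).IsEquivalence] :
    (baseChange f).ReflectsIsomorphisms :=
  reflectsIsomorphisms_of_iso (Monad.comparisonForget (mapBaseChangeAdj f))

lemma liftsPairs_of_reflectsIsomorphisms [(baseChange f).ReflectsIsomorphisms] :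
    LiftsPairs f := by
  intro b₀ b₁ hb
  by_contra! hnolift
  let ι : PUnit.{u + 1} ⊕ PUnit.{u + 1} → B := Sum.elim (fun _ => b₀) (fun _ => b₁)
  -- `b₀ ≤ b₁` as a discrete pair and as a chain; base change cannot tell them apart
  let pair : Over B := Over.mk (Preord.ofHom ⟨ι, fun _ _ h => by cases h <;> exact le_rfl⟩ :
    Preord.of (PUnit.{u + 1} ⊕ PUnit.{u + 1}) ⟶ B)
  let chain : Over B := Over.mk (Preord.ofHom ⟨ι ∘ ofLex, by
      rintro (_ | _) (_ | _) h
      all_goals first | exact le_rfl | exact hb | exact absurd h Sum.Lex.not_inr_le_inl⟩ :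
    Preord.of (Lex (PUnit.{u + 1} ⊕ PUnit.{u + 1})) ⟶ B)
  let h : pair ⟶ chain := Over.homMk (Preord.ofHom ⟨toLex, Sum.Lex.toLex_mono⟩) rfl
  have : IsIso ((baseChange f).map h) := isIso_baseChange_map h toLex.bijective <| by
    rintro ⟨⟨a, _ | _⟩, ha⟩ ⟨⟨a', _ | _⟩, ha'⟩ hle hlex
    · exact le_rfl
    · exact (hnolift a a' hle ha ha').elim
    · exact absurd (show toLex (Sum.inr _) ≤ toLex (Sum.inl _) from hlex) Sum.Lex.not_inr_le_inl
    · exact le_rfl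
  have := isIso_of_reflects_iso h (baseChange f)
  have hinv (x : pair.left) : (inv h).left (h.left x) = x := over_congr_apply (IsIso.hom_inv_id h) x
  refine Sum.not_inl_le_inr (a := PUnit.unit.{u + 1}) (b := PUnit.unit.{u + 1}) ?_
  rw [← hinv (.inl _), ← hinv (.inr _)]
  exact (inv h).left.hom.monotone (Sum.Lex.inl_le_inr _ _)

lemma liftsTriples_of_isEquivalence [(Monad.comparison (mapBaseChangeAdj f)).IsEquivalence] :
    LiftsTriples f := by
  have hf : LiftsPairs f := liftsPairs_of_reflectsIsomorphisms
  intro b₀ b₁ b₂ h₀₁ h₁₂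
  by_contra! hnolift
  obtain ⟨u₀, u₁, hu, hu₀, hu₁⟩ := hf b₀ b₁ h₀₁
  obtain ⟨v₁, v₂, hv, hv₁, hv₂⟩ := hf b₁ b₂ h₁₂
  obtain ⟨w₀, w₂, hw, hw₀, hw₂⟩ := hf b₀ b₂ (h₀₁.trans h₁₂)
  let W := stepChainAlgebra (b := ![b₀, b₁, b₂]) hnolift
  let e (a : A) (i : Fin 3) (h : f a = ![b₀, b₁, b₂] i) : W.A.left := ⟨(a, i), h⟩
  have htrans := isTrans_descentLE_of_mem_essImage hf
    (Functor.EssSurj.mem_essImage (F := Monad.comparison (mapBaseChangeAdj f)) W)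
  -- `w₀ ~ u₀ ≤ u₁ ~ v₁ ≤ v₂ ~ w₂` in the orbit order forces the forbidden step `w₀ ≤ w₂`
  have h₀₁ : descentLE W (.mk W (e w₀ 0 hw₀)) (.mk W (e u₁ 1 hu₁)) := by
    rw [stepChainAlgebra_mk_eq_mk hnolift (e := e w₀ 0 hw₀) (e' := e u₀ 0 hu₀) rfl]
    exact descentLE_mk_of_le ⟨hu, show (0 : Fin 3) ≤ 1 by decide, show 1 ≤ 0 + 1 by decide⟩
  have h₁₂ : descentLE W (.mk W (e u₁ 1 hu₁)) (.mk W (e w₂ 2 hw₂)) := by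
    rw [stepChainAlgebra_mk_eq_mk hnolift (e := e u₁ 1 hu₁) (e' := e v₁ 1 hv₁) rfl,
      stepChainAlgebra_mk_eq_mk hnolift (e := e w₂ 2 hw₂) (e' := e v₂ 2 hv₂) rfl]
    exact descentLE_mk_of_le ⟨hv, show (1 : Fin 3) ≤ 2 by decide, show 2 ≤ 1 + 1 by decide⟩
  have h₀₂ : e w₀ 0 hw₀ ≤ e w₂ 2 hw₂ := le_of_descentLE hw (htrans.trans _ _ _ h₀₁ h₁₂)
  exact absurd h₀₂.2.2 (show ¬2 ≤ 0 + 1 by decide)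

end Necessity

/-- **Theorem (Janelidze–Sobral).** A morphism `f : A ⟶ B` in `Ord` is an effective descent
morphism iff every chain `b₀ ≤ b₁ ≤ b₂` in `B` lifts to a chain `a₀ ≤ a₁ ≤ a₂` in `A`. -/
theorem statement2 {A B : Preord.{u}} (f : A ⟶ B) :
    IsEffectiveDescentMorphism f ↔
      ∀ b₀ b₁ b₂ : ↥B, b₀ ≤ b₁ → b₁ ≤ b₂ →
        ∃ a₀ a₁ a₂ : ↥A, a₀ ≤ a₁ ∧ a₁ ≤ a₂ ∧ f a₀ = b₀ ∧ f a₁ = b₁ ∧ f a₂ = b₂ := by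
  change _ ↔ LiftsTriples f
  rw [IsEffectiveDescentMorphism,
    comparison_isEquivalence_iff_of_sameLeftAdjoint _ (mapBaseChangeAdj f)]
  refine ⟨fun _ => liftsTriples_of_isEquivalence, fun hf => ?_⟩
  have := baseChange_faithful hf.liftsPairs.surjective
  have := comparison_full hf.liftsPairs
  have : (Monad.comparison (mapBaseChangeAdj f)).EssSurj :=
    ⟨fun _ => mem_essImage_of_isTrans (isTrans_descentLE_of_liftsTriples hf)⟩
  exact { }

end Desc
end

section
/- Let X be a locally complete ordered set. Then every connected component of X (an equivalence class of the equivalence relation generated by ≤, i.e., generated by zigzags x = x₀ ≤ x₁ ≥ x₂ ≤ … ≤ xₙ = x') is a locally complete ordered set with a bottom element. Moreover, if X is locally cartesian closed, then so is each connected component of X. -/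
/-!
A connected component of `X` is a lower set, so inside it every down-set `↓w` is the down-set
of `X`; local completeness and local cartesian closedness therefore restrict to it. For the
bottom element, let `⊥_y` be the join of `∅` in `↓y`. If `y ≤ z` then `⊥_y ≅ ⊥_z`, hence
`⊥_y ≅ ⊥_z` along every zigzag, and `⊥_x ≤ ⊥_z ≤ z` for every `z` connected to `x`.
-/

open CategoryTheory Limits

universe u
universe u₁ v₁ u₂ v₂

attribute [local instance] CategoryTheory.ConcreteCategory.instFunLike

namespace Desc

variable (X : Type u) [Preorder X]

variable {X}

variable {X : Type u} [Preorder X]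

variable (X : Type u) [Preorder X]

section LowerSet

variable {α : Type*} [Preorder α] {s : Set α}

theorem IsLowerSet.isMeet_subtype_iff (hs : IsLowerSet s) {y z m : s} :
    IsMeet y z m ↔ IsMeet y.1 z.1 m.1 :=
  ⟨fun ⟨hmy, hmz, hm⟩ => ⟨hmy, hmz, fun u huy huz => hm ⟨u, hs huy y.2⟩ huy huz⟩,
    fun ⟨hmy, hmz, hm⟩ => ⟨hmy, hmz, fun u huy huz => hm u huy huz⟩⟩

theorem IsLowerSet.exists_isMeet_subtype_iff (hs : IsLowerSet s) {y z : s} {P : α → Prop} :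
    (∃ m : s, IsMeet y z m ∧ P m) ↔ ∃ m, IsMeet y.1 z.1 m ∧ P m :=
  ⟨fun ⟨m, hm, hP⟩ => ⟨m, (IsLowerSet.isMeet_subtype_iff hs).mp hm, hP⟩,
    fun ⟨m, hm, hP⟩ => ⟨⟨m, hs hm.1 y.2⟩, (IsLowerSet.isMeet_subtype_iff hs).mpr hm, hP⟩⟩

theorem IsLocalJoin.of_val_image {x j : s} {S : Set s}
    (hj : IsLocalJoin x.1 (Subtype.val '' S) j.1) : IsLocalJoin x S j :=
  ⟨hj.1, fun t ht => hj.2.1 t ⟨t, ht, rfl⟩,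
    fun u hux hu => hj.2.2 u hux (by rintro _ ⟨t, ht, rfl⟩; exact hu t ht)⟩

theorem IsLowerSet.locallyComplete_subtype (hs : IsLowerSet s) (h : LocallyComplete α) :
    LocallyComplete s := by
  intro x S hS
  obtain ⟨j, hj⟩ := h x (Subtype.val '' S) (by rintro _ ⟨t, ht, rfl⟩; exact hS t ht)
  exact ⟨⟨j, hs hj.1 x.2⟩, hj.of_val_image⟩

theorem IsLowerSet.locallyBinaryMeets_subtype (hs : IsLowerSet s) (h : LocallyBinaryMeets α) :
    LocallyBinaryMeets s := by
  intro x y z hy hz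
  obtain ⟨m, hm⟩ := h x y z hy hz
  exact ⟨⟨m, hs hm.1 y.2⟩, (IsLowerSet.isMeet_subtype_iff hs).mpr hm⟩

theorem IsLowerSet.locallyCartesianClosed_subtype (hs : IsLowerSet s)
    (h : LocallyCartesianClosed α) : LocallyCartesianClosed s := by
  refine ⟨IsLowerSet.locallyBinaryMeets_subtype hs h.1, fun x y z hy hz => ?_⟩
  obtain ⟨e, hex, he⟩ := h.2 x y z hy hz
  exact ⟨⟨e, hs hex x.2⟩, hex,
    fun w hw => (IsLowerSet.exists_isMeet_subtype_iff hs).trans (he w hw)⟩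

end LowerSet

section Components

variable {α β : Type*} [Preorder α] [Preorder β]

theorem isLowerSet_setOf_eqvGen (x : α) : IsLowerSet {y | Relation.EqvGen (· ≤ ·) x y} :=
  fun _ _ hzy hy => hy.trans _ _ _ (.symm _ _ (.rel _ _ hzy))

theorem LocallyComplete.exists_isLeast_Iic (h : LocallyComplete α) (y : α) :
    ∃ b, IsLeast (Set.Iic y) b := by
  obtain ⟨b, hby, -, hb⟩ := h y ∅ (by simp)
  exact ⟨b, hby, fun u hu => hb u hu (by simp)⟩

theorem antisymmRel_of_eqvGen {f : α → β}
    (hf : ∀ y z, y ≤ z → AntisymmRel (· ≤ ·) (f y) (f z)) {a b : α}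
    (h : Relation.EqvGen (· ≤ ·) a b) : AntisymmRel (· ≤ ·) (f a) (f b) := by
  induction h with
  | rel y z hyz => exact hf y z hyz
  | refl => exact .rfl
  | symm _ _ _ ih => exact ih.symm
  | trans _ _ _ _ _ ih₁ ih₂ => exact ih₁.trans ih₂

theorem antisymmRel_of_isLeast_Iic {y z b c : α} (hyz : y ≤ z)
    (hb : IsLeast (Set.Iic y) b) (hc : IsLeast (Set.Iic z) c) : AntisymmRel (· ≤ ·) b c :=
  have hcb : c ≤ b := hc.2 (hb.1.trans hyz)
  ⟨hb.2 (hcb.trans hb.1), hcb⟩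

theorem exists_bot_of_exists_isLeast_Iic (h : ∀ y : α, ∃ b, IsLeast (Set.Iic y) b) (x : α) :
    ∃ b : {y : α // Relation.EqvGen (· ≤ ·) x y}, ∀ z, b ≤ z := by
  choose bot hbot using h
  have hconn : ∀ z, Relation.EqvGen (· ≤ ·) x z → bot x ≤ bot z := fun z hz =>
    (antisymmRel_of_eqvGen (fun y z hyz => antisymmRel_of_isLeast_Iic hyz (hbot y) (hbot z)) hz).1
  exact ⟨⟨bot x, .symm _ _ (.rel _ _ (hbot x).1)⟩,
    fun z => (hconn z.1 z.2).trans (hbot z.1).1⟩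

end Components

/-- **Lemma (Janelidze).** If `X` is a locally complete ordered set, then each connected
component of `X` (w.r.t. the equivalence relation generated by `≤`) is a locally complete
ordered set with a bottom element; moreover it is locally cartesian closed whenever `X` is. -/
theorem statement16 {X : Type u} [Preorder X] (hX : LocallyComplete X) (x : X) :
    LocallyComplete {y : X // Relation.EqvGen (fun a b : X => a ≤ b) x y} ∧
      (∃ b : {y : X // Relation.EqvGen (fun a b : X => a ≤ b) x y}, ∀ z, b ≤ z) ∧
      (LocallyCartesianClosed X →
        LocallyCartesianClosed {y : X // Relation.EqvGen (fun a b : X => a ≤ b) x y}) :=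
  ⟨IsLowerSet.locallyComplete_subtype (isLowerSet_setOf_eqvGen x) hX,
    exists_bot_of_exists_isLeast_Iic hX.exists_isLeast_Iic x,
    IsLowerSet.locallyCartesianClosed_subtype (isLowerSet_setOf_eqvGen x)⟩

end Desc
end

section
/- Let X be an ordered set and let (X_i)_{i∈I} be its connected components, so that X is the coproduct (disjoint union) of the X_i. The functor Ord//X → ∏_{i∈I} (Ord//X_i), sending (A, α : A → X) to the family of (co)restrictions (A_i, α_i : A_i → X_i) where A_i = α⁻¹(X_i), and a morphism f to the family of its (co)restrictions, is an equivalence of categories. -/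
open CategoryTheory Limits

universe u
universe u₁ v₁ u₂ v₂

attribute [local instance] CategoryTheory.ConcreteCategory.instFunLike

namespace Desc

variable (X : Type u) [Preorder X]

variable {X}

variable {X : Type u} [Preorder X]

variable (X : Type u) [Preorder X]

/-! A point `a` lies in the piece `α⁻¹(X_i)` for `i` the component of `α a`; as `≤` never leaves a
component, a monotone `α` splits `A` into these pieces with no order relations between different
pieces, and a lax morphism maps each piece into the corresponding one. So a morphism is recovered
from its restrictions by evaluating each point in its own piece, and a family `(A_i, α_i)` is
recovered from the disjoint union `Σ i, A_i` with the induced map to `X`. -/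

namespace ConnComp

variable {X : Type u} [Preorder X]

abbrev mk (x : X) : ConnComp X := Quot.mk (fun a b : X => a ≤ b) x

theorem mk_eq_mk_of_le {x y : X} (h : x ≤ y) : mk x = mk y := Quot.sound h

end ConnComp

def OrdComma.isoOfOrderIso {X : Type u} [Preorder X] {A B : OrdComma X}
    (e : A.carrier ≃o B.carrier) (he : ∀ a, B.map (e a) = A.map a) : A ≅ B where
  hom := ⟨e, e.monotone, fun a => (he a).ge⟩
  inv := ⟨e.symm, e.symm.monotone, fun b => by simpa using (he (e.symm b)).le⟩
  hom_inv_id := OrdCommaHom.ext (funext e.symm_apply_apply)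
  inv_hom_id := OrdCommaHom.ext (funext e.apply_symm_apply)

section componentFunctor

variable {X : Type u} [Preorder X] {A B : OrdComma X}

theorem val_apply_eq_apply_mk (g : (componentFunctor X).obj A ⟶ (componentFunctor X).obj B)
    {i : ConnComp X} (a : ((componentFunctor X).obj A i).carrier) :
    (OrdCommaHom.toFun (g i) a).1 =
      (OrdCommaHom.toFun (g (ConnComp.mk (A.map a.1))) ⟨a.1, rfl⟩).1 := by
  obtain ⟨a, rfl⟩ := a
  rfl

def glueHom (g : (componentFunctor X).obj A ⟶ (componentFunctor X).obj B) : A ⟶ B where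
  toFun a := (OrdCommaHom.toFun (g (ConnComp.mk (A.map a))) ⟨a, rfl⟩).1
  mono a b hab :=
    (val_apply_eq_apply_mk g ⟨a, ConnComp.mk_eq_mk_of_le (A.mono hab)⟩).symm.trans_le
      (OrdCommaHom.mono (g (ConnComp.mk (A.map b))) hab)
  le a := OrdCommaHom.le (g (ConnComp.mk (A.map a))) ⟨a, rfl⟩

def fullyFaithfulComponentFunctor : (componentFunctor X).FullyFaithful where
  preimage := glueHom
  map_preimage g := funext fun _ =>
    OrdCommaHom.ext (funext fun a => Subtype.ext (val_apply_eq_apply_mk g a).symm)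
  preimage_map _ := rfl

def glueComponents (P : ∀ i : ConnComp X, OrdComma (Component X i)) : OrdComma X where
  carrier := Σ i, (P i).carrier
  map p := ((P p.1).map p.2).1
  mono := by
    rintro _ _ ⟨i, a, b, hab⟩
    exact (P i).mono hab

noncomputable def restrictGlueComponentsIso (P : ∀ i : ConnComp X, OrdComma (Component X i))
    (i : ConnComp X) :
    (componentFunctor X).obj (glueComponents P) i ≅ P i := by
  let incl : (P i).carrier → ((componentFunctor X).obj (glueComponents P) i).carrier :=
    fun b => ⟨⟨i, b⟩, ((P i).map b).2⟩
  have incl_injective : Function.Injective incl := fun _ _ h =>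
    sigma_mk_injective (β := fun j => (P j).carrier) (congrArg Subtype.val h)
  have incl_surjective : Function.Surjective incl := by
    rintro ⟨⟨j, b⟩, hb⟩
    obtain rfl : j = i := ((P j).map b).2.symm.trans hb
    exact ⟨b, rfl⟩
  let e : (P i).carrier ≃o ((componentFunctor X).obj (glueComponents P) i).carrier :=
    ⟨Equiv.ofBijective incl ⟨incl_injective, incl_surjective⟩, Sigma.mk_le_mk_iff⟩
  exact (OrdComma.isoOfOrderIso e fun _ => rfl).symm

end componentFunctor

/-- The comparison functor `Ord // X ⥤ ∏_{i ∈ I} Ord // X_i`, where `(X_i)_{i ∈ I}` are the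
connected components of `X`, is an equivalence of categories. -/
theorem statement17 (X : Type u) [Preorder X] :
    (componentFunctor X).IsEquivalence := by
  have fullyFaithful := fullyFaithfulComponentFunctor (X := X)
  exact
    { faithful := fullyFaithful.faithful
      full := fullyFaithful.full
      essSurj := ⟨fun P => ⟨glueComponents P, ⟨Pi.isoMk (restrictGlueComponentsIso P)⟩⟩⟩ }

end Desc
end
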